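/- arXiv:2308.07268 — 6 statements merged into one kernel-verified Lean document; each statement's English description precedes it below -/
import Mathlib

section
/- Given a finite set X of points on the real line and a finite set J of closed intervals on the real line, the minimum size of a subset X' ⊆ X that hits every interval in J (i.e., every interval of J contains a point of X') equals the maximum size of an X-disjoint subfamily of J (a subfamily in which each point of X lies in at most one interval), provided every interval in J contains at least one point of X. -/
open Classical

/-- `X'` hits every interval in `J` (intervals given by endpoint pairs). -/
def Hits (X' : Finset ℝ) (J : Finset (ℝ × ℝ)) : Prop :=
  ∀ I ∈ J, ∃ x ∈ X', x ∈ Set.Icc I.1 I.2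

/-- A subfamily `J'` is `X`-disjoint: each point of `X` lies in at most one interval of `J'`. -/
def XDisjoint (X : Finset ℝ) (J' : Finset (ℝ × ℝ)) : Prop :=
  ∀ x ∈ X, ∀ I ∈ J', ∀ I' ∈ J',
    x ∈ Set.Icc I.1 I.2 → x ∈ Set.Icc I'.1 I'.2 → I = I'

/-!
Weak duality: a hitting set of an `X`-disjoint family needs a distinct point for each interval.
Strong duality comes from the greedy algorithm: take the interval `I₀` with the smallest right
endpoint and the largest point `p` of `X` in `I₀`. Any interval missing `p` also misses every
point of `X ∩ I₀` (such a point lies left of `p`, and `p` lies left of its right endpoint), so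
recursing on the intervals missing `p` and adding `p` to the hitting set and `I₀` to the
disjoint family keeps both of equal size.
-/

namespace Hits

theorem mono {X' : Finset ℝ} {J J' : Finset (ℝ × ℝ)} (h : Hits X' J) (hJ : J' ⊆ J) :
    Hits X' J' :=
  fun I hI => h I (hJ hI)

theorem insert_of_filter_notMem {X' : Finset ℝ} {J : Finset (ℝ × ℝ)} (p : ℝ)
    (h : Hits X' (J.filter fun I => p ∉ Set.Icc I.1 I.2)) : Hits (insert p X') J := by
  intro I hI
  by_cases hpI : p ∈ Set.Icc I.1 I.2
  · exact ⟨p, Finset.mem_insert_self _ _, hpI⟩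
  · obtain ⟨x, hx, hxI⟩ := h I (Finset.mem_filter.mpr ⟨hI, hpI⟩)
    exact ⟨x, Finset.mem_insert_of_mem hx, hxI⟩

end Hits

namespace XDisjoint

theorem card_le {X X' : Finset ℝ} {J' : Finset (ℝ × ℝ)} (hd : XDisjoint X J') (hX' : X' ⊆ X)
    (hh : Hits X' J') : J'.card ≤ X'.card :=
  Finset.card_le_card_of_forall_subsingleton (fun (I : ℝ × ℝ) (x : ℝ) => x ∈ Set.Icc I.1 I.2) hh
    fun x hx _ ⟨hI, hxI⟩ _ ⟨hI', hxI'⟩ => hd x (hX' hx) _ hI _ hI' hxI hxI'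

theorem insert {X : Finset ℝ} {J' : Finset (ℝ × ℝ)} {I₀ : ℝ × ℝ} (hd : XDisjoint X J')
    (hsep : ∀ x ∈ X, x ∈ Set.Icc I₀.1 I₀.2 → ∀ I ∈ J', x ∉ Set.Icc I.1 I.2) :
    XDisjoint X (insert I₀ J') := by
  intro x hx I hI I' hI' hxI hxI'
  rcases Finset.mem_insert.mp hI with rfl | hIJ <;>
    rcases Finset.mem_insert.mp hI' with rfl | hI'J
  · rfl
  · exact absurd hxI' (hsep x hx hxI I' hI'J)
  · exact absurd hxI (hsep x hx hxI' I hIJ)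
  · exact hd x hx I hIJ I' hI'J hxI hxI'

end XDisjoint

theorem exists_greedy_pivot {X : Finset ℝ} {J : Finset (ℝ × ℝ)} (hJ : J.Nonempty)
    (hcov : ∀ I ∈ J, ∃ x ∈ X, x ∈ Set.Icc I.1 I.2) :
    ∃ I₀ ∈ J, ∃ p ∈ X, p ∈ Set.Icc I₀.1 I₀.2 ∧
      ∀ x ∈ X, x ∈ Set.Icc I₀.1 I₀.2 → ∀ I ∈ J, p ∉ Set.Icc I.1 I.2 → x ∉ Set.Icc I.1 I.2 := by
  obtain ⟨I₀, hI₀, hmin⟩ := J.exists_min_image (fun I => I.2) hJ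
  have hS : (X.filter fun x => x ∈ Set.Icc I₀.1 I₀.2).Nonempty := by
    obtain ⟨x, hx, hxI₀⟩ := hcov I₀ hI₀
    exact ⟨x, Finset.mem_filter.mpr ⟨hx, hxI₀⟩⟩
  obtain ⟨hpX, hpI₀⟩ := Finset.mem_filter.mp (Finset.max'_mem _ hS)
  refine ⟨I₀, hI₀, _, hpX, hpI₀, fun x hx hxI₀ I hI hpI hxI => hpI ⟨?_, ?_⟩⟩
  · exact hxI.1.trans (Finset.le_max' _ x (Finset.mem_filter.mpr ⟨hx, hxI₀⟩))
  · exact hpI₀.2.trans (hmin I hI)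

theorem exists_hits_xDisjoint_card_le (X : Finset ℝ) (J : Finset (ℝ × ℝ))
    (hcov : ∀ I ∈ J, ∃ x ∈ X, x ∈ Set.Icc I.1 I.2) :
    ∃ X' ⊆ X, ∃ J' ⊆ J, Hits X' J ∧ XDisjoint X J' ∧ X'.card ≤ J'.card := by
  induction J using Finset.strongInduction with
  | _ J ih =>
  rcases J.eq_empty_or_nonempty with rfl | hJ
  · exact ⟨∅, Finset.empty_subset _, ∅, Finset.empty_subset _,
      fun _ h => absurd h (Finset.notMem_empty _),
      fun _ _ _ h => absurd h (Finset.notMem_empty _), le_rfl⟩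
  obtain ⟨I₀, hI₀, p, hpX, hpI₀, hsep⟩ := exists_greedy_pivot hJ hcov
  set Jrem := J.filter fun I => p ∉ Set.Icc I.1 I.2
  have hrem : Jrem ⊆ J := Finset.filter_subset _ _
  have hI₀rem : I₀ ∉ Jrem := fun h => (Finset.mem_filter.mp h).2 hpI₀
  obtain ⟨X₁, hX₁, J₁, hJ₁, hhit₁, hdisj₁, hcard₁⟩ :=
    ih Jrem (Finset.filter_ssubset.mpr ⟨I₀, hI₀, not_not.mpr hpI₀⟩)
      fun I hI => hcov I (hrem hI)
  refine ⟨insert p X₁, Finset.insert_subset hpX hX₁, insert I₀ J₁,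
    Finset.insert_subset hI₀ (hJ₁.trans hrem), hhit₁.insert_of_filter_notMem p,
    hdisj₁.insert fun x hx hxI₀ I hI =>
      hsep x hx hxI₀ I (hrem (hJ₁ hI)) (Finset.mem_filter.mp (hJ₁ hI)).2, ?_⟩
  calc (insert p X₁).card ≤ X₁.card + 1 := Finset.card_insert_le _ _
    _ ≤ J₁.card + 1 := by omega
    _ = (insert I₀ J₁).card := (Finset.card_insert_of_notMem fun h => hI₀rem (hJ₁ h)).symm

/-- Minimum hitting set size equals maximum `X`-disjoint subfamily size,
provided every interval contains a point of `X`. -/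
theorem min_hitting_eq_max_disjoint (X : Finset ℝ) (J : Finset (ℝ × ℝ))
    (hcov : ∀ I ∈ J, ∃ x ∈ X, x ∈ Set.Icc I.1 I.2) :
    ((X.powerset.filter fun X' => Hits X' J).inf'
        ⟨X, Finset.mem_filter.mpr ⟨Finset.mem_powerset_self X, hcov⟩⟩ Finset.card)
      =
    ((J.powerset.filter fun J' => XDisjoint X J').sup'
        ⟨∅, Finset.mem_filter.mpr ⟨Finset.empty_mem_powerset J, by
          intro x _ I hI; exact absurd hI (Finset.notMem_empty I)⟩⟩ Finset.card) := by
  apply le_antisymm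
  · obtain ⟨X', hX', J', hJ', hhit, hdisj, hcard⟩ := exists_hits_xDisjoint_card_le X J hcov
    calc _ ≤ X'.card := Finset.inf'_le _ (Finset.mem_filter.mpr ⟨Finset.mem_powerset.mpr hX', hhit⟩)
      _ ≤ J'.card := hcard
      _ ≤ _ := Finset.le_sup' _ (Finset.mem_filter.mpr ⟨Finset.mem_powerset.mpr hJ', hdisj⟩)
  · refine Finset.sup'_le _ _ fun J' hJ' => Finset.le_inf' _ _ fun X' hX' => ?_
    obtain ⟨hJ'J, hdisj⟩ := Finset.mem_filter.mp hJ'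
    obtain ⟨hX'X, hhit⟩ := Finset.mem_filter.mp hX'
    exact hdisj.card_le (Finset.mem_powerset.mp hX'X) (hhit.mono (Finset.mem_powerset.mp hJ'J))
end

section
/- Consider the greedy algorithm that processes candidates c₁,...,c_m in increasing order and adds c_k to T whenever there exist indices i ≤ k ≤ j ≤ m with δ_{i,j}(f) ≥ |T ∩ C_{i,j}| + (j - k + 1). Assuming |C_{i,j}| ≥ δ_{i,j}(f) for all i ≤ j, the resulting set T satisfies |T ∩ C_{i,j}| ≥ δ_{i,j}(f) for all 1 ≤ i ≤ j ≤ m. -/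
open Classical

noncomputable def Cij {m : ℕ} (c : Fin m → ℝ) (i j : Fin m) : Finset ℝ :=
  (Finset.univ.filter fun t => i ≤ t ∧ t ≤ j).image c

/-- The greedy algorithm scanning `c₁, ..., c_m` left to right: after `k` steps it has
considered candidates `c₁, ..., c_k`, adding `c_k` whenever some window `[i,j]` with
`i ≤ k ≤ j` satisfies `δ_{i,j} ≥ |T ∩ C_{i,j}| + (j - k + 1)`. -/
noncomputable def greedy {m : ℕ} (c : Fin m → ℝ) (δ : Fin m → Fin m → ℕ) : ℕ → Finset ℝ
  | 0 => ∅
  | (k+1) =>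
    if h : k < m then
      if ∃ i j : Fin m, i ≤ ⟨k, h⟩ ∧ (⟨k, h⟩ : Fin m) ≤ j ∧
          (greedy c δ k ∩ Cij c i j).card + ((j : ℕ) - k + 1) ≤ δ i j
      then greedy c δ k ∪ {c ⟨k, h⟩} else greedy c δ k
    else greedy c δ k

lemma greedy_succ_subset {m : ℕ} (c : Fin m → ℝ) (δ : Fin m → Fin m → ℕ) (k : ℕ) :
    greedy c δ k ⊆ greedy c δ (k+1) := by
  rw [greedy]
  split_ifs <;> simp [Finset.subset_union_left]

lemma greedy_mem {m : ℕ} (c : Fin m → ℝ) (δ : Fin m → Fin m → ℕ) (k : ℕ) :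
    ∀ x ∈ greedy c δ k, ∃ t : Fin m, (t : ℕ) < k ∧ c t = x := by
  induction k with
  | zero => simp [greedy]
  | succ k ih =>
    intro x hx
    rw [greedy] at hx
    split_ifs at hx with h h2
    · rcases Finset.mem_union.1 hx with hx | hx
      · obtain ⟨t, ht, rfl⟩ := ih x hx
        exact ⟨t, ht.trans (Nat.lt_succ_self k), rfl⟩
      · exact ⟨⟨k, h⟩, Nat.lt_succ_self k, (Finset.mem_singleton.1 hx).symm⟩
    · obtain ⟨t, ht, rfl⟩ := ih x hx
      exact ⟨t, ht.trans (Nat.lt_succ_self k), rfl⟩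
    · obtain ⟨t, ht, rfl⟩ := ih x hx
      exact ⟨t, ht.trans (Nat.lt_succ_self k), rfl⟩

lemma card_Cij {m : ℕ} (c : Fin m → ℝ) (hc : Function.Injective c) (i j : Fin m) :
    (Cij c i j).card = (j : ℕ) + 1 - i := by
  rw [Cij, Finset.card_image_of_injective _ hc]
  have : (Finset.univ.filter fun t : Fin m => i ≤ t ∧ t ≤ j) = Finset.Icc i j := by
    ext t; simp [Finset.mem_Icc]
  rw [this, Fin.card_Icc]

lemma greedy_inv {m : ℕ} (c : Fin m → ℝ) (hc : StrictMono c)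
    (δ : Fin m → Fin m → ℕ)
    (hfeas : ∀ i j : Fin m, i ≤ j → δ i j ≤ (Cij c i j).card) :
    ∀ k : ℕ, ∀ i j : Fin m, i ≤ j →
      δ i j ≤ (greedy c δ k ∩ Cij c i j).card + ((j : ℕ) + 1 - max (i : ℕ) k) := by
  intro k
  induction k with
  | zero =>
    intro i j hij
    simp only [Nat.max_zero]
    calc δ i j ≤ (Cij c i j).card := hfeas i j hij
    _ = (j : ℕ) + 1 - i := card_Cij c hc.injective i j
    _ ≤ _ := Nat.le_add_left _ _
  | succ k ih =>
    intro i j hij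
    have hmono : (greedy c δ k ∩ Cij c i j).card ≤ (greedy c δ (k+1) ∩ Cij c i j).card :=
      Finset.card_le_card (Finset.inter_subset_inter_right (greedy_succ_subset c δ k))
    rcases lt_or_ge (j : ℕ) k with hjk | hkj
    · -- both remainders are 0
      have h1 : (j : ℕ) + 1 - max (i : ℕ) k = 0 := by omega
      have h2 : (j : ℕ) + 1 - max (i : ℕ) (k+1) = 0 := by omega
      have := ih i j hij
      rw [h1, Nat.add_zero] at this
      rw [h2, Nat.add_zero]
      exact this.trans hmono
    · -- k ≤ j
      have hkm : k < m := lt_of_le_of_lt hkj j.isLt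
      rcases lt_or_ge k (i : ℕ) with hki | hik
      · -- window entirely right of k: remainders equal
        have heq : (j : ℕ) + 1 - max (i : ℕ) (k+1) = (j : ℕ) + 1 - max (i : ℕ) k := by omega
        rw [heq]
        exact (ih i j hij).trans (Nat.add_le_add_right hmono _)
      · -- i ≤ k ≤ j
        have hrem : (j : ℕ) + 1 - max (i : ℕ) (k+1) = (j : ℕ) - k := by omega
        have hrem0 : (j : ℕ) + 1 - max (i : ℕ) k = (j : ℕ) - k + 1 := by omega
        rw [hrem]
        rw [greedy, dif_pos hkm]
        split_ifs with hcond
        · -- added c_k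
          have hnotmem : c ⟨k, hkm⟩ ∉ greedy c δ k := by
            intro hmem
            obtain ⟨t, ht, hteq⟩ := greedy_mem c δ k _ hmem
            have := hc.injective hteq
            rw [this] at ht
            exact absurd ht (lt_irrefl k)
          have hmemC : c ⟨k, hkm⟩ ∈ Cij c i j := by
            rw [Cij]
            apply Finset.mem_image_of_mem
            simp only [Finset.mem_filter, Finset.mem_univ, true_and]
            exact ⟨by rwa [Fin.le_def], by rwa [Fin.le_def]⟩
          have hcard : ((greedy c δ k ∪ {c ⟨k, hkm⟩}) ∩ Cij c i j).card
              = (greedy c δ k ∩ Cij c i j).card + 1 := by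
            rw [Finset.union_inter_distrib_right, Finset.singleton_inter_of_mem hmemC,
              Finset.card_union_of_disjoint]
            · simp
            · simp only [Finset.disjoint_singleton_right, Finset.mem_inter]
              exact fun h => hnotmem h.1
          rw [hcard]
          have := ih i j hij
          rw [hrem0] at this
          omega
        · -- not added: condition fails for (i,j)
          push_neg at hcond
          have := hcond i j (by rwa [Fin.le_def]) (by rwa [Fin.le_def])
          omega

/-- If every window demand is feasible (`|C_{i,j}| ≥ δ_{i,j}`), then the greedy set meets
all window demands: `|T ∩ C_{i,j}| ≥ δ_{i,j}` for all `i ≤ j`. -/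
theorem greedy_meets_demands {m : ℕ} (c : Fin m → ℝ) (hc : StrictMono c)
    (δ : Fin m → Fin m → ℕ)
    (hfeas : ∀ i j : Fin m, i ≤ j → δ i j ≤ (Cij c i j).card) :
    ∀ i j : Fin m, i ≤ j → δ i j ≤ (greedy c δ m ∩ Cij c i j).card := by
  intro i j hij
  have := greedy_inv c hc δ hfeas m i j hij
  have h0 : (j : ℕ) + 1 - max (i : ℕ) m = 0 := by
    have := j.isLt
    have := i.isLt
    omega
  rwa [h0, Nat.add_zero] at this
end

section
/- Let (V, C) be finite subsets of a metric space, T ⊆ C a committee, and f ≥ 1. For each voter v let d_f(v) be the distance from v to its (f+1)-th closest candidate in C, and let d' = max_{v∈V} d_f(v). Then for every failing set J ⊆ C with |J| ≤ f there exists a replacement set R ⊆ C\J of size at most |T ∩ J| such that σ((T\J) ∪ R) ≤ d' + 2σ(T), where σ(S) = max_{v∈V} min_{c∈S} d(v,c). -/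
open Classical

/-- Min-max Chamberlin–Courant score of committee `S` for voters `V`. -/
noncomputable def score {α : Type*} [MetricSpace α] (V S : Finset α) : ℝ :=
  sSup ((fun v => Metric.infDist v (S : Set α)) '' (V : Set α))

/-- Distance from `v` to its `(f+1)`-th closest candidate in `C`. -/
noncomputable def dF {α : Type*} [MetricSpace α] (C : Finset α) (f : ℕ) (v : α) : ℝ :=
  sInf {x : ℝ | f + 1 ≤ (C.filter fun c => dist v c ≤ x).card}

lemma score_eq_sup' {α : Type*} [MetricSpace α] (V S : Finset α) (hV : V.Nonempty) :
    score V S = V.sup' hV (fun v => Metric.infDist v (S : Set α)) :=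
  (Finset.sup'_eq_csSup_image V hV _).symm

lemma dF_spec {α : Type*} [MetricSpace α] (C : Finset α) (f : ℕ) (hC : f < C.card) (v : α) :
    0 ≤ dF C f v ∧ f + 1 ≤ (C.filter fun c => dist v c ≤ dF C f v).card := by
  have hCne : C.Nonempty := Finset.card_pos.mp (lt_of_le_of_lt (Nat.zero_le f) hC)
  set S : Set ℝ := {x : ℝ | f + 1 ≤ (C.filter fun c => dist v c ≤ x).card} with hSdef
  have hSne : S.Nonempty := by
    refine ⟨C.sup' hCne (dist v), ?_⟩
    have hfil : C.filter (fun c => dist v c ≤ C.sup' hCne (dist v)) = C := by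
      apply Finset.filter_true_of_mem
      intro c hc; exact Finset.le_sup' _ hc
    simp only [hSdef, Set.mem_setOf_eq, hfil]
    omega
  have hlow : ∀ x ∈ S, (0:ℝ) ≤ x := by
    intro x hx
    have hpos : 0 < (C.filter fun c => dist v c ≤ x).card := by
      have := hx; simp only [hSdef, Set.mem_setOf_eq] at this; omega
    obtain ⟨c, hc⟩ := Finset.card_pos.mp hpos
    exact le_trans dist_nonneg (Finset.mem_filter.mp hc).2
  have hSbd : BddBelow S := ⟨0, hlow⟩
  have hdf : dF C f v = sInf S := rfl
  constructor
  · rw [hdf]; exact le_csInf hSne hlow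
  · rw [hdf]
    by_contra hm
    set m := sInf S with hmdef
    push_neg at hm
    have hm' : (C.filter fun c => dist v c ≤ m).card ≤ f := by omega
    have hA : (C.filter fun c => ¬ dist v c ≤ m).Nonempty := by
      rw [← Finset.card_pos]
      have := Finset.card_filter_add_card_filter_not
        (s := C) (p := fun c => dist v c ≤ m)
      omega
    set m' := (C.filter fun c => ¬ dist v c ≤ m).inf' hA (dist v) with hm'def
    have hmm' : m < m' := by
      rw [hm'def, Finset.lt_inf'_iff]
      intro c hc
      exact lt_of_not_ge (Finset.mem_filter.mp hc).2
    have hlb : ∀ x ∈ S, m' ≤ x := by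
      intro x hx
      by_contra hxm'
      push_neg at hxm'
      have hsub : (C.filter fun c => dist v c ≤ x) ⊆ (C.filter fun c => dist v c ≤ m) := by
        intro c hc
        rw [Finset.mem_filter] at hc ⊢
        refine ⟨hc.1, ?_⟩
        by_contra hcm
        have : m' ≤ dist v c := Finset.inf'_le _ (Finset.mem_filter.mpr ⟨hc.1, hcm⟩)
        linarith [hc.2]
      have hcard : (C.filter fun c => dist v c ≤ x).card ≤ f :=
        le_trans (Finset.card_le_card hsub) hm'
      simp only [hSdef, Set.mem_setOf_eq] at hx
      omega
    have : m' ≤ m := le_csInf hSne hlb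
    linarith

lemma exists_close {α : Type*} [MetricSpace α] (C J : Finset α) (f : ℕ) (hC : f < C.card)
    (hJ : J.card ≤ f) (v : α) : ∃ c ∈ C \ J, dist v c ≤ dF C f v := by
  obtain ⟨-, hcard⟩ := dF_spec C f hC v
  set F := C.filter fun c => dist v c ≤ dF C f v with hF
  have h1 : F.card ≤ (F \ J).card + J.card := Finset.card_le_card_sdiff_add_card
  have h2 : 0 < (F \ J).card := by omega
  obtain ⟨c, hc⟩ := Finset.card_pos.mp h2
  rw [Finset.mem_sdiff] at hc
  obtain ⟨hcF, hcJ⟩ := hc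
  rw [hF, Finset.mem_filter] at hcF
  exact ⟨c, Finset.mem_sdiff.mpr ⟨hcF.1, hcJ⟩, hcF.2⟩

/-- For every failing set `J` of size at most `f` there is a replacement set
`R ⊆ C \ J` with `|R| ≤ |T ∩ J|` whose committee has score at most `d' + 2σ(T)`,
where `d' = max_{v ∈ V} d_f(v)`. -/
theorem replacement_score_bound {α : Type*} [MetricSpace α]
    (V C T : Finset α) (hV : V.Nonempty) (hTC : T ⊆ C) (f : ℕ) (hf : 1 ≤ f)
    (hC : f < C.card) :
    ∀ J ⊆ C, J.card ≤ f →
      ∃ R ⊆ C \ J, R.card ≤ (T ∩ J).card ∧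
        score V ((T \ J) ∪ R) ≤ (V.sup' hV fun v => dF C f v) + 2 * score V T := by
  intro J hJC hJf
  obtain ⟨v0, hv0⟩ := id hV
  have hd' : 0 ≤ V.sup' hV fun v => dF C f v :=
    le_trans (dF_spec C f hC v0).1 (Finset.le_sup' _ hv0)
  by_cases hT : T.Nonempty
  · -- main case
    have hnear : ∀ v : α, ∃ t ∈ (T : Set α), Metric.infDist v (T : Set α) = dist v t :=
      fun v => (T.finite_toSet.isCompact).exists_infDist_eq_dist
        (Finset.coe_nonempty.mpr hT) v
    set near : α → α := fun v => (hnear v).choose with hneardef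
    have hnearT : ∀ v, near v ∈ T := fun v => (hnear v).choose_spec.1
    have hnearD : ∀ v, Metric.infDist v (T : Set α) = dist v (near v) :=
      fun v => (hnear v).choose_spec.2
    have hCJne : (C \ J).Nonempty := by
      rw [← Finset.card_pos, Finset.card_sdiff_of_subset hJC]; omega
    have hg : ∀ t : α, ∃ c ∈ C \ J,
        ((∃ w ∈ V, near w = t) → ∃ w ∈ V, near w = t ∧ dist w c ≤ dF C f w) := by
      intro t
      by_cases h : ∃ w ∈ V, near w = t
      · obtain ⟨w, hwV, hwt⟩ := h
        obtain ⟨c, hc, hdc⟩ := exists_close C J f hC hJf w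
        exact ⟨c, hc, fun _ => ⟨w, hwV, hwt, hdc⟩⟩
      · exact ⟨hCJne.choose, hCJne.choose_spec, fun h' => absurd h' h⟩
    choose g hgCJ hgspec using hg
    refine ⟨(T ∩ J).image g, ?_, Finset.card_image_le, ?_⟩
    · intro x hx
      obtain ⟨t, -, rfl⟩ := Finset.mem_image.mp hx
      exact hgCJ t
    · -- score bound
      set K := (T \ J) ∪ (T ∩ J).image g with hK
      rw [score_eq_sup' V K hV, Finset.sup'_le_iff]
      intro v hv
      have hσv : Metric.infDist v (T : Set α) ≤ score V T := by
        rw [score_eq_sup' V T hV]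
        exact Finset.le_sup' (fun v => Metric.infDist v (T : Set α)) hv
      have hσ0 : 0 ≤ score V T := le_trans Metric.infDist_nonneg hσv
      have hvt : dist v (near v) ≤ score V T := (hnearD v) ▸ hσv
      by_cases hvJ : near v ∈ J
      · have htK : g (near v) ∈ K := Finset.mem_union_right _
          (Finset.mem_image_of_mem g (Finset.mem_inter.mpr ⟨hnearT v, hvJ⟩))
        have h1 : Metric.infDist v (K : Set α) ≤ dist v (g (near v)) :=
          Metric.infDist_le_dist_of_mem (by exact_mod_cast htK)
        obtain ⟨w, hwV, hwt, hwd⟩ := hgspec (near v) ⟨v, hv, rfl⟩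
        have hwσ : dist w (near w) ≤ score V T := by
          have : Metric.infDist w (T : Set α) ≤ score V T := by
            rw [score_eq_sup' V T hV]
            exact Finset.le_sup' (fun v => Metric.infDist v (T : Set α)) hwV
          exact (hnearD w) ▸ this
        have hwd' : dF C f w ≤ V.sup' hV fun v => dF C f v := Finset.le_sup' _ hwV
        have htri : dist v (g (near v)) ≤
            dist v (near v) + dist (near v) w + dist w (g (near v)) :=
          dist_triangle4 v (near v) w (g (near v))
        have hnw : dist (near v) w = dist w (near w) := by
          rw [dist_comm, hwt]
        linarith
      · have htK : near v ∈ K := Finset.mem_union_left _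
          (Finset.mem_sdiff.mpr ⟨hnearT v, hvJ⟩)
        have h1 : Metric.infDist v (K : Set α) ≤ dist v (near v) :=
          Metric.infDist_le_dist_of_mem (by exact_mod_cast htK)
        linarith
  · -- T empty
    rw [Finset.not_nonempty_iff_eq_empty] at hT
    subst hT
    refine ⟨∅, by simp, by simp, ?_⟩
    have hsc : score V (∅ : Finset α) = 0 := by
      rw [score_eq_sup' V ∅ hV]
      simp [Metric.infDist_empty]
    simp only [Finset.empty_sdiff, Finset.union_empty, hsc]
    linarith
end

section
/- In the approximate decision algorithm for optimal fault-tolerant committee: whenever a candidate c is added to the committee T because some voter v satisfies d(v, T) > 3σ and d(v, c) ≤ σ (recording wit[c] = v), any two distinct candidates c, c' in the final committee satisfy d(wit[c], wit[c']) > 2σ. -/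
open Classical

/-- In the inner loop of the approximate decision algorithm, candidates are added one by
one: `c i` is inserted into the current committee `T i` at a moment when its witness voter
`v i` satisfies `d(v i, T i) > 3σ` and `d(v i, c i) ≤ σ`. Then the witnesses of any two
distinct candidates in the final committee are more than `2σ` apart. -/
theorem witnesses_far_apart {α : Type*} [MetricSpace α]
    (σ : ℝ) (r : ℕ) (T : ℕ → Finset α) (c v : ℕ → α)
    (hstep : ∀ i < r,
      3 * σ < Metric.infDist (v i) (T i : Set α) ∧
      dist (v i) (c i) ≤ σ ∧
      T (i + 1) = T i ∪ {c i}) :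
    ∀ i < r, ∀ j, j < r → c i ≠ c j → 2 * σ < dist (v i) (v j) := by
  have hmem : ∀ i j : ℕ, i < j → j ≤ r → c i ∈ T j := by
    intro i j hij hjr
    induction j with
    | zero => omega
    | succ k ih =>
      obtain ⟨_, _, hT⟩ := hstep k (by omega)
      rw [hT]
      rcases Nat.lt_succ_iff_lt_or_eq.mp hij with h | h
      · exact Finset.mem_union_left _ (ih h (by omega))
      · subst h; exact Finset.mem_union_right _ (Finset.mem_singleton_self _)
  have key : ∀ i j : ℕ, i < j → j < r → 2 * σ < dist (v i) (v j) := by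
    intro i j hij hjr
    obtain ⟨hinf, _, _⟩ := hstep j hjr
    obtain ⟨_, hdi, _⟩ := hstep i (by omega)
    have hci : c i ∈ (T j : Set α) := by
      exact_mod_cast hmem i j hij (le_of_lt hjr)
    have h1 : Metric.infDist (v j) (T j : Set α) ≤ dist (v j) (c i) :=
      Metric.infDist_le_dist_of_mem hci
    have h2 : dist (v j) (c i) ≤ dist (v j) (v i) + dist (v i) (c i) :=
      dist_triangle _ _ _
    have := dist_comm (v i) (v j)
    linarith
  intro i hi j hj hne
  rcases lt_trichotomy i j with h | h | h
  · exact key i j h hj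
  · exact absurd (congrArg c h) hne
  · rw [dist_comm]; exact key j i h hi
end

section
/- Let C be a finite set in a metric space partitioned into cells each of diameter at most 2/h, and let T, T' ⊆ C be two committees for which there exists a bijection π: C → C mapping each cell to itself (π(l) = l for each cell l as sets) with x ∈ T ⟺ π(x) ∈ T'. Then |σ_f(T) − σ_f(T')| ≤ 2/h. -/
open Classical

/-- Worst-case `f`-fault-tolerance score of committee `T` over candidates `C`. -/
noncomputable def sigmaF {α : Type*} [MetricSpace α] (V C T : Finset α) (f : ℕ) : ℝ :=
  (C.powerset.filter fun J => J.card ≤ f).sup'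
    ⟨∅, by simp⟩ fun J =>
      ((C \ J).powerset.filter fun R => R.card ≤ (T ∩ J).card).inf'
        ⟨∅, by simp⟩ fun R => score V ((T \ J) ∪ R)

lemma score_le_of_image {α : Type*} [MetricSpace α] (V S S' : Finset α) (hV : V.Nonempty)
    (c : ℝ) (hc : 0 ≤ c) (g : α → α) (hS : S = S'.image g)
    (hd : ∀ s' ∈ S', dist (g s') s' ≤ c) :
    score V S ≤ score V S' + c := by
  have hbdd : BddAbove ((fun v => Metric.infDist v (S' : Set α)) '' (V : Set α)) :=
    (V.finite_toSet.image _).bddAbove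
  obtain ⟨v₀, hv₀⟩ := hV
  have hS'nonneg : 0 ≤ score V S' := by
    have : Metric.infDist v₀ (S' : Set α) ≤ score V S' :=
      le_csSup hbdd ⟨v₀, hv₀, rfl⟩
    have := Metric.infDist_nonneg (x := v₀) (s := (S' : Set α))
    linarith
  apply Real.sSup_le _ (by linarith)
  rintro x ⟨v, hv, rfl⟩
  have hle : Metric.infDist v (S' : Set α) ≤ score V S' :=
    le_csSup hbdd ⟨v, hv, rfl⟩
  rcases S'.eq_empty_or_nonempty with hE | hne
  · subst hE
    simp only [Finset.image_empty] at hS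
    subst hS
    simp only [Finset.coe_empty, Metric.infDist_empty]
    linarith
  · have hne' : (S' : Set α).Nonempty := by exact_mod_cast hne
    have key : Metric.infDist v (S : Set α) - c ≤ Metric.infDist v (S' : Set α) := by
      by_contra hcon
      push_neg at hcon
      obtain ⟨y, hy, hylt⟩ := (Metric.infDist_lt_iff hne').mp hcon
      have hy' : y ∈ S' := by exact_mod_cast hy
      have hgy : g y ∈ S := by rw [hS]; exact Finset.mem_image_of_mem g hy'
      have h1 : Metric.infDist v (S : Set α) ≤ dist v (g y) :=
        Metric.infDist_le_dist_of_mem (by exact_mod_cast hgy)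
      have h2 : dist v (g y) ≤ dist v y + dist (g y) y := by
        rw [dist_comm (g y) y]; exact dist_triangle v y (g y)
      have := hd y hy'
      linarith
    linarith

lemma sigmaF_le {α ι : Type*} [MetricSpace α]
    (V C : Finset α) (hV : V.Nonempty) (f : ℕ) (c : ℝ) (hc : 0 ≤ c)
    (cell : α → ι)
    (hdiam : ∀ a ∈ C, ∀ b ∈ C, cell a = cell b → dist a b ≤ c)
    (T T' : Finset α) (hT : T ⊆ C) (hT' : T' ⊆ C)
    (π : α ≃ α) (hπC : ∀ a ∈ C, π a ∈ C)
    (hπcell : ∀ a ∈ C, cell (π a) = cell a)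
    (hπT : ∀ a ∈ C, (a ∈ T ↔ π a ∈ T')) :
    sigmaF V C T f ≤ sigmaF V C T' f + c := by
  have hCimg : C.image π = C := by
    apply Finset.eq_of_subset_of_card_le
    · intro x hx
      obtain ⟨a, ha, rfl⟩ := Finset.mem_image.mp hx
      exact hπC a ha
    · rw [Finset.card_image_of_injective _ π.injective]
  have hsymmC : ∀ a ∈ C, π.symm a ∈ C := by
    intro a ha
    rw [← hCimg] at ha
    obtain ⟨b, hb, rfl⟩ := Finset.mem_image.mp ha
    simpa using hb
  unfold sigmaF
  apply Finset.sup'_le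
  intro J hJ
  rw [Finset.mem_filter, Finset.mem_powerset] at hJ
  obtain ⟨hJC, hJf⟩ := hJ
  set J' := J.image π with hJ'def
  have hJ'C : J' ⊆ C := by
    intro x hx
    obtain ⟨a, ha, rfl⟩ := Finset.mem_image.mp hx
    exact hπC a (hJC ha)
  have hJ'card : J'.card = J.card := Finset.card_image_of_injective _ π.injective
  have hJ'mem : J' ∈ C.powerset.filter fun J => J.card ≤ f := by
    rw [Finset.mem_filter, Finset.mem_powerset]
    exact ⟨hJ'C, hJ'card ▸ hJf⟩
  have hsup : ((C \ J').powerset.filter fun R => R.card ≤ (T' ∩ J').card).inf'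
        ⟨∅, by simp⟩ (fun R => score V ((T' \ J') ∪ R)) ≤ sigmaF V C T' f := by
    unfold sigmaF
    exact Finset.le_sup' (fun J => ((C \ J).powerset.filter fun R => R.card ≤ (T' ∩ J).card).inf'
        ⟨∅, by simp⟩ fun R => score V ((T' \ J) ∪ R)) hJ'mem
  obtain ⟨R', hR'mem, hR'eq⟩ := Finset.exists_mem_eq_inf'
    (⟨∅, by simp⟩ : ((C \ J').powerset.filter fun R => R.card ≤ (T' ∩ J').card).Nonempty)
    (fun R => score V ((T' \ J') ∪ R))
  rw [Finset.mem_filter, Finset.mem_powerset] at hR'mem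
  obtain ⟨hR'sub, hR'card⟩ := hR'mem
  set R := R'.image π.symm with hRdef
  -- T∩J image
  have hTJimg : (T ∩ J).image π = T' ∩ J' := by
    ext y
    simp only [Finset.mem_image, Finset.mem_inter]
    constructor
    · rintro ⟨a, ⟨haT, haJ⟩, rfl⟩
      exact ⟨(hπT a (hJC haJ)).mp haT, Finset.mem_image_of_mem π haJ⟩
    · rintro ⟨hyT', hyJ'⟩
      obtain ⟨a, haJ, rfl⟩ := Finset.mem_image.mp hyJ'
      exact ⟨a, ⟨(hπT a (hJC haJ)).mpr hyT', haJ⟩, rfl⟩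
  have hRmem : R ∈ (C \ J).powerset.filter fun R => R.card ≤ (T ∩ J).card := by
    rw [Finset.mem_filter, Finset.mem_powerset]
    constructor
    · intro x hx
      obtain ⟨r, hr, rfl⟩ := Finset.mem_image.mp hx
      have hrC : r ∈ C \ J' := hR'sub hr
      rw [Finset.mem_sdiff] at hrC ⊢
      refine ⟨hsymmC r hrC.1, fun hmem => hrC.2 ?_⟩
      have : π (π.symm r) ∈ J' := Finset.mem_image_of_mem π hmem
      simpa using this
    · have h1 : R.card = R'.card := Finset.card_image_of_injective _ π.symm.injective
      have h2 : (T' ∩ J').card = (T ∩ J).card := by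
        rw [← hTJimg, Finset.card_image_of_injective _ π.injective]
      omega
  have hinfle : ((C \ J).powerset.filter fun R => R.card ≤ (T ∩ J).card).inf'
        ⟨∅, by simp⟩ (fun R => score V ((T \ J) ∪ R)) ≤ score V ((T \ J) ∪ R) :=
    Finset.inf'_le _ hRmem
  -- score comparison
  have hTJ' : (T' \ J').image π.symm = T \ J := by
    ext x
    simp only [Finset.mem_image, Finset.mem_sdiff]
    constructor
    · rintro ⟨y, ⟨hyT', hyJ'⟩, rfl⟩
      have hyC : y ∈ C := hT' hyT'
      have hxC : π.symm y ∈ C := hsymmC y hyC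
      refine ⟨(hπT _ hxC).mpr (by simpa using hyT'), fun hmem => hyJ' ?_⟩
      have : π (π.symm y) ∈ J' := Finset.mem_image_of_mem π hmem
      simpa using this
    · rintro ⟨hxT, hxJ⟩
      refine ⟨π x, ⟨(hπT x (hT hxT)).mp hxT, fun hmem => ?_⟩, by simp⟩
      obtain ⟨a, haJ, ha⟩ := Finset.mem_image.mp hmem
      exact hxJ (π.injective ha ▸ haJ)
  have hSimg : (T \ J) ∪ R = ((T' \ J') ∪ R').image π.symm := by
    rw [Finset.image_union, hTJ']
  have hsub : (T' \ J') ∪ R' ⊆ C := by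
    intro x hx
    rcases Finset.mem_union.mp hx with hx | hx
    · exact hT' (Finset.mem_sdiff.mp hx).1
    · exact (Finset.mem_sdiff.mp (hR'sub hx)).1
  have hscore : score V ((T \ J) ∪ R) ≤ score V ((T' \ J') ∪ R') + c := by
    apply score_le_of_image V _ _ hV c hc π.symm hSimg
    intro s' hs'
    have hs'C : s' ∈ C := hsub hs'
    have h1 : π.symm s' ∈ C := hsymmC s' hs'C
    have h2 : cell (π.symm s') = cell s' := by
      have := hπcell (π.symm s') h1
      simpa using this.symm
    exact hdiam _ h1 _ hs'C h2
  calc ((C \ J).powerset.filter fun R => R.card ≤ (T ∩ J).card).inf'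
        ⟨∅, by simp⟩ (fun R => score V ((T \ J) ∪ R))
      ≤ score V ((T \ J) ∪ R) := hinfle
    _ ≤ score V ((T' \ J') ∪ R') + c := hscore
    _ = ((C \ J').powerset.filter fun R => R.card ≤ (T' ∩ J').card).inf'
        ⟨∅, by simp⟩ (fun R => score V ((T' \ J') ∪ R)) + c := by rw [hR'eq]
    _ ≤ sigmaF V C T' f + c := by linarith


/-- If a bijection `π` of the candidate set maps every cell (of diameter at most `2/h`)
to itself and carries `T` to `T'`, then `|σ_f(T) − σ_f(T')| ≤ 2/h`. -/
theorem cell_bijection_score_close {α ι : Type*} [MetricSpace α]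
    (V C : Finset α) (hV : V.Nonempty) (f : ℕ) (h : ℝ) (hh : 0 < h)
    (cell : α → ι)
    (hdiam : ∀ a ∈ C, ∀ b ∈ C, cell a = cell b → dist a b ≤ 2 / h)
    (T T' : Finset α) (hT : T ⊆ C) (hT' : T' ⊆ C)
    (π : α ≃ α) (hπC : ∀ a ∈ C, π a ∈ C)
    (hπcell : ∀ a ∈ C, cell (π a) = cell a)
    (hπT : ∀ a ∈ C, (a ∈ T ↔ π a ∈ T')) :
    |sigmaF V C T f - sigmaF V C T' f| ≤ 2 / h := by
  have hc : 0 ≤ 2 / h := by positivity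
  have hCimg : C.image π = C := by
    apply Finset.eq_of_subset_of_card_le
    · intro x hx
      obtain ⟨a, ha, rfl⟩ := Finset.mem_image.mp hx
      exact hπC a ha
    · rw [Finset.card_image_of_injective _ π.injective]
  have hsymmC : ∀ a ∈ C, π.symm a ∈ C := by
    intro a ha
    rw [← hCimg] at ha
    obtain ⟨b, hb, rfl⟩ := Finset.mem_image.mp ha
    simpa using hb
  have h1 := sigmaF_le V C hV f (2 / h) hc cell hdiam T T' hT hT' π hπC hπcell hπT
  have h2 := sigmaF_le V C hV f (2 / h) hc cell hdiam T' T hT' hT π.symm hsymmC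
    (fun a ha => by
      have := hπcell (π.symm a) (hsymmC a ha)
      simpa using this.symm)
    (fun a ha => by
      have := hπT (π.symm a) (hsymmC a ha)
      simpa using this.symm)
  rw [abs_sub_le_iff]
  constructor <;> linarith
end

section
/- In one dimension, the greedy algorithm for interval hitting (repeatedly take the leftmost unhit interval and choose the rightmost available candidate point inside it) produces a minimum-size hitting set among subsets of the available candidates, whenever a hitting set exists. -/
open Classical

/-- The greedy interval-hitting algorithm: repeatedly take the unhit interval with the
smallest right endpoint (the leftmost unhit interval; among ties, the most constrained
one), pick the rightmost available candidate point inside it, discard all intervals hit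
by that point, and repeat. -/
noncomputable def greedyHit (A : Finset ℝ) (Is : Finset (ℝ × ℝ)) : Finset ℝ :=
  if h : Is.Nonempty then
    have himg : (Is.image Prod.snd).Nonempty := h.image _
    let r := (Is.image Prod.snd).min' himg
    have hfil : ((Is.filter fun p => p.2 = r).image Prod.fst).Nonempty := by
      obtain ⟨p, hp, hpr⟩ := Finset.mem_image.mp ((Is.image Prod.snd).min'_mem himg)
      exact ⟨p.1, Finset.mem_image.mpr ⟨p, Finset.mem_filter.mpr ⟨hp, hpr⟩, rfl⟩⟩
    let l := ((Is.filter fun p => p.2 = r).image Prod.fst).max' hfil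
    let cands := A.filter fun a => a ∈ Set.Icc l r
    if hc : cands.Nonempty then
      insert (cands.max' hc)
        (greedyHit A (Is.filter fun p => cands.max' hc ∉ Set.Icc p.1 p.2))
    else ∅
  else ∅
termination_by Is.card
decreasing_by
  apply Finset.card_lt_card
  rw [Finset.ssubset_iff_of_subset (Finset.filter_subset _ _)]
  obtain ⟨pl, hpl, hpl1⟩ := Finset.mem_image.mp
    (((Is.filter fun p => p.2 = r).image Prod.fst).max'_mem hfil)
  obtain ⟨hplIs, hpl2⟩ := Finset.mem_filter.mp hpl
  refine ⟨pl, hplIs, ?_⟩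
  intro hmem
  have hx := (Finset.mem_filter.mp (cands.max'_mem hc)).2
  exact (Finset.mem_filter.mp hmem).2 (by rw [hpl1, hpl2] at *; exact hx)

private lemma filim (Is : Finset (ℝ × ℝ)) (hne : Is.Nonempty) :
    ((Is.filter fun p => p.2 = (Is.image Prod.snd).min' (hne.image _)).image Prod.fst).Nonempty := by
  obtain ⟨p, hp, hpr⟩ := Finset.mem_image.mp ((Is.image Prod.snd).min'_mem (hne.image _))
  exact ⟨p.1, Finset.mem_image.mpr ⟨p, Finset.mem_filter.mpr ⟨hp, hpr⟩, rfl⟩⟩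

/-- Whenever a hitting set made of available candidates exists, the greedy algorithm
produces a hitting set of minimum size. -/
theorem greedyHit_is_minimum (A : Finset ℝ) (Is : Finset (ℝ × ℝ))
    (hex : ∃ H ⊆ A, ∀ p ∈ Is, ∃ x ∈ H, x ∈ Set.Icc p.1 p.2) :
    greedyHit A Is ⊆ A ∧
    (∀ p ∈ Is, ∃ x ∈ greedyHit A Is, x ∈ Set.Icc p.1 p.2) ∧
    ∀ H ⊆ A, (∀ p ∈ Is, ∃ x ∈ H, x ∈ Set.Icc p.1 p.2) →
      (greedyHit A Is).card ≤ H.card := by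
  revert hex
  induction Is using Finset.strongInduction with
  | _ Is ih =>
  intro hex
  by_cases hne : Is.Nonempty
  case neg =>
    rw [Finset.not_nonempty_iff_eq_empty] at hne
    subst hne
    rw [greedyHit.eq_def]
    simp
  case pos =>
  obtain ⟨H0, hH0A, hH0hit⟩ := hex
  obtain ⟨r, l, g, hlmem, hrmin, hlmax, hgA, hgIcc, hgmax, heq⟩ :
      ∃ r l g : ℝ, l ∈ (Is.filter fun p => p.2 = r).image Prod.fst ∧
        (∀ p ∈ Is, r ≤ p.2) ∧
        (∀ p ∈ Is, p.2 = r → p.1 ≤ l) ∧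
        g ∈ A ∧ g ∈ Set.Icc l r ∧
        (∀ x ∈ A, x ∈ Set.Icc l r → x ≤ g) ∧
        greedyHit A Is = insert g (greedyHit A (Is.filter fun p => g ∉ Set.Icc p.1 p.2)) := by
    rw [greedyHit.eq_def, dif_pos hne]
    dsimp only
    split_ifs with hc
    · generalize_proofs h1 h2 at hc ⊢
      refine ⟨_, _, _, Finset.max'_mem _ h2,
        fun p hp => Finset.min'_le _ _ (Finset.mem_image_of_mem _ hp),
        fun p hp hp2 => Finset.le_max' _ _
          (Finset.mem_image_of_mem _ (Finset.mem_filter.mpr ⟨hp, hp2⟩)),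
        (Finset.mem_filter.mp (Finset.max'_mem _ hc)).1,
        (Finset.mem_filter.mp (Finset.max'_mem _ hc)).2,
        fun x hx hI => Finset.le_max' _ _ (Finset.mem_filter.mpr ⟨hx, hI⟩), rfl⟩
    · exfalso
      generalize_proofs h1 h2 at hc
      apply hc
      obtain ⟨p, hp, hp1⟩ := Finset.mem_image.mp (Finset.max'_mem _ h2)
      obtain ⟨hpIs, hp2⟩ := Finset.mem_filter.mp hp
      obtain ⟨x, hxH, hxIcc⟩ := hH0hit p hpIs
      refine ⟨x, Finset.mem_filter.mpr ⟨hH0A hxH, ?_⟩⟩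
      rw [← hp1, ← hp2]
      exact hxIcc
  obtain ⟨pl, hplmem, hpl1⟩ := Finset.mem_image.mp hlmem
  obtain ⟨hplIs, hpl2⟩ := Finset.mem_filter.mp hplmem
  set Is' := Is.filter (fun p => g ∉ Set.Icc p.1 p.2) with hIs'
  have hplIs' : pl ∉ Is' := by
    intro hmem
    exact (Finset.mem_filter.mp hmem).2 (by rw [hpl1, hpl2]; exact hgIcc)
  have hsub : Is' ⊂ Is := ⟨Finset.filter_subset _ _, fun hs => hplIs' (hs hplIs)⟩
  have hex' : ∃ H ⊆ A, ∀ p ∈ Is', ∃ x ∈ H, x ∈ Set.Icc p.1 p.2 :=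
    ⟨H0, hH0A, fun p hp => hH0hit p (Finset.filter_subset _ _ hp)⟩
  obtain ⟨ihA, ihHit, ihMin⟩ := ih Is' hsub hex'
  rw [heq]
  refine ⟨?_, ?_, ?_⟩
  · intro x hx
    rcases Finset.mem_insert.mp hx with h | h
    · exact h ▸ hgA
    · exact ihA h
  · intro p hp
    by_cases hg' : g ∈ Set.Icc p.1 p.2
    · exact ⟨g, Finset.mem_insert_self _ _, hg'⟩
    · obtain ⟨x, hx, hxI⟩ := ihHit p (Finset.mem_filter.mpr ⟨hp, hg'⟩)
      exact ⟨x, Finset.mem_insert_of_mem hx, hxI⟩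
  · intro H hHA hHhit
    obtain ⟨x, hxH, hxIcc⟩ := hHhit pl hplIs
    rw [hpl1, hpl2] at hxIcc
    have hxg : x ≤ g := hgmax x (hHA hxH) hxIcc
    have hhit' : ∀ p ∈ Is', ∃ y ∈ H.erase x, y ∈ Set.Icc p.1 p.2 := by
      intro p hp
      obtain ⟨hpIs, hgp⟩ := Finset.mem_filter.mp hp
      obtain ⟨y, hyH, hyIcc⟩ := hHhit p hpIs
      refine ⟨y, Finset.mem_erase.mpr ⟨?_, hyH⟩, hyIcc⟩
      rintro rfl
      rw [Set.mem_Icc] at hyIcc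
      exact hgp (Set.mem_Icc.mpr ⟨hyIcc.1.trans hxg,
        (Set.mem_Icc.mp hgIcc).2.trans (hrmin p hpIs)⟩)
    have hcard := ihMin (H.erase x) ((Finset.erase_subset _ _).trans hHA) hhit'
    have hpos : 1 ≤ H.card := Finset.card_pos.mpr ⟨x, hxH⟩
    have herase : (H.erase x).card = H.card - 1 := Finset.card_erase_of_mem hxH
    calc (insert g (greedyHit A Is')).card ≤ (greedyHit A Is').card + 1 :=
          Finset.card_insert_le _ _
      _ ≤ (H.erase x).card + 1 := by omega
      _ ≤ H.card := by omega
end
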